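/- arXiv:1901.05998 — 2 statements merged into one kernel-verified Lean document; each statement's English description precedes it below -/
import Mathlib

section
/- Fix an integer J ≥ 2. Let (ξ_1,…,ξ_N; Q^X_1,…,Q^X_N) be a refinement instance and k^X ∈ ℤ_{≥0}^N a feasible configuration with Σ_{i ∈ Z_1} k^X_i = 1. Then there exists k ∈ K_RED such that ⟨k, Q⟩ ≥ (2/3)·U, where U = Σ_{i=1}^N k^X_i Q^X_i. -/
attribute [local instance] Classical.propDecidable

/-- Membership in the interval `I j` of partition `I`:
`I (2*m) = ((2/3)·2⁻ᵐ, 2⁻ᵐ]` and `I (2*m+1) = ((1/2)·2⁻ᵐ, (2/3)·2⁻ᵐ]`. -/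
def memI (j : ℕ) (x : ℝ) : Prop :=
  if j % 2 = 0 then (2/3) * (1/2)^(j/2) < x ∧ x ≤ (1/2)^(j/2)
  else (1/2) * (1/2)^(j/2) < x ∧ x ≤ (2/3) * (1/2)^(j/2)

noncomputable def uB (j : ℕ) : ℝ :=
  if j % 2 = 0 then (1/2)^(j/2) else (2/3) * (1/2)^(j/2)

lemma uB_pos (j : ℕ) : 0 < uB j := by unfold uB; split <;> positivity

lemma uB_even (m : ℕ) : uB (2*m) = (1/2 : ℝ)^m := by
  have h1 : (2*m) % 2 = 0 := by omega
  have h2 : (2*m) / 2 = m := by omega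
  simp [uB, h1, h2]

lemma uB_odd (m : ℕ) : uB (2*m+1) = (2/3) * (1/2 : ℝ)^m := by
  have h1 : (2*m+1) % 2 = 1 := by omega
  have h2 : (2*m+1) / 2 = m := by omega
  simp [uB, h1, h2]

lemma memI_iff (j : ℕ) (x : ℝ) : memI j x ↔ uB (j+1) < x ∧ x ≤ uB j := by
  unfold memI uB
  rcases Nat.mod_two_eq_zero_or_one j with h | h
  · have h1 : (j+1) % 2 = 1 := by omega
    have h2 : (j+1) / 2 = j / 2 := by omega
    simp [h, h1, h2]
  · have h1 : (j+1) % 2 = 0 := by omega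
    have h2 : (j+1) / 2 = j / 2 + 1 := by omega
    simp only [h, h1, h2]
    norm_num
    intro _
    rw [pow_succ]
    constructor <;> intro h' <;> linarith

lemma uB_succ_lt (j : ℕ) : uB (j+1) < uB j := by
  rcases Nat.even_or_odd j with ⟨m, hm⟩ | ⟨m, hm⟩
  · have : j = 2*m := by omega
    subst this
    rw [uB_odd, uB_even]
    have : (0:ℝ) < (1/2)^m := by positivity
    linarith
  · subst hm
    have h : 2*m+1+1 = 2*(m+1) := by ring
    rw [h, uB_even, uB_odd]
    have : (0:ℝ) < (1/2:ℝ)^m := by positivity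
    have h2 : ((1:ℝ)/2)^(m+1) = (1/2) * (1/2)^m := by ring
    rw [h2]; linarith

lemma uB_anti {j j' : ℕ} (h : j ≤ j') : uB j' ≤ uB j := by
  induction h with
  | refl => exact le_refl _
  | step h ih => exact le_trans (uB_succ_lt _).le (by exact ih)

lemma memI_unique {j j' : ℕ} {x : ℝ} (hj : memI j x) (hj' : memI j' x) : j = j' := by
  rw [memI_iff] at hj hj'
  rcases lt_trichotomy j j' with h | h | h
  · exact absurd (hj'.2.trans (uB_anti h)) (not_le.mpr hj.1)
  · exact h
  · exact absurd (hj.2.trans (uB_anti h)) (not_le.mpr hj'.1)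

lemma memI_exists (J : ℕ) (x : ℝ) (h1 : (1/2:ℝ)^J < x) (h2 : x ≤ 1) (hJ : 1 ≤ J) :
    ∃ j < 2*J, memI j x := by
  have h0 : x ≤ uB 0 := by simpa [uB] using h2
  obtain ⟨j, hjb, hle, hgr⟩ : ∃ j, j ≤ 2*J - 1 ∧ x ≤ uB j ∧
      ∀ k, j < k → k ≤ 2*J - 1 → ¬ (x ≤ uB k) :=
    ⟨Nat.findGreatest (fun j => x ≤ uB j) (2*J - 1),
      Nat.findGreatest_le _,
      by simpa using Nat.findGreatest_spec (P := fun j => x ≤ uB j) (Nat.zero_le _) h0,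
      fun k hk hk' => by simpa using Nat.findGreatest_is_greatest (P := fun j => x ≤ uB j) hk hk'⟩
  have hlt : uB (j+1) < x := by
    by_cases hc : j + 1 ≤ 2*J - 1
    · exact lt_of_not_ge (hgr (j+1) (Nat.lt_succ_self j) hc)
    · have hj' : j + 1 = 2*J := by omega
      rw [hj', show 2*J = 2*J from rfl, uB_even]
      exact h1
  exact ⟨j, by omega, (memI_iff j x).mpr ⟨hlt, hle⟩⟩

lemma sum_two_point (Q : ℕ → ℝ) (M a b ca cb : ℕ) (hab : a ≠ b) (ha : a < M) (hb : b < M) :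
    ∑ j ∈ Finset.range M, ((if j = a then ca else if j = b then cb else 0 : ℕ) : ℝ) * Q j
      = ca * Q a + cb * Q b := by
  have key : ∀ j ∈ Finset.range M,
      ((if j = a then ca else if j = b then cb else 0 : ℕ) : ℝ) * Q j
      = (if j = a then (ca:ℝ) * Q j else 0) + (if j = b then (cb:ℝ) * Q j else 0) := by
    intro j _
    split_ifs with h1 h2 <;> simp_all
  rw [Finset.sum_congr rfl key, Finset.sum_add_distrib, Finset.sum_ite_eq', Finset.sum_ite_eq']
  simp [Finset.mem_range.mpr ha, Finset.mem_range.mpr hb]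

lemma sum_one_point (Q : ℕ → ℝ) (M a ca : ℕ) (ha : a < M) :
    ∑ j ∈ Finset.range M, ((if j = a then ca else 0 : ℕ) : ℝ) * Q j = ca * Q a := by
  have key : ∀ j ∈ Finset.range M,
      ((if j = a then ca else 0 : ℕ) : ℝ) * Q j = (if j = a then (ca:ℝ) * Q j else 0) := by
    intro j _; split_ifs <;> simp
  rw [Finset.sum_congr rfl key, Finset.sum_ite_eq']
  simp [Finset.mem_range.mpr ha]

/-- The reduced configuration set `K_RED`, as functions `ℕ → ℕ` supported on `{0, …, 2J-1}`. -/
def KRED (J : ℕ) : Set (ℕ → ℕ) :=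
  {k | (∃ m < J, k = fun i => if i = 2*m then 2^m else 0)
     ∨ (∃ m, 1 ≤ m ∧ m < J ∧ k = fun i => if i = 2*m+1 then 3 * 2^(m-1) else 0)
     ∨ (∃ m, 2 ≤ m ∧ m < J ∧ k = fun i => if i = 1 then 1 else if i = 2*m then 2^m / 3 else 0)
     ∨ (∃ m, 1 ≤ m ∧ m < J ∧ k = fun i => if i = 1 then 1 else if i = 2*m+1 then 2^(m-1) else 0)}

/-- The aggregated virtual-queue sizes: `Q j = Σ_{i : ξ i ∈ I j} QX i`. -/
noncomputable def Qagg {N : ℕ} (ξ : Fin N → ℝ) (QX : Fin N → ℕ) (j : ℕ) : ℕ :=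
  ∑ i, if memI j (ξ i) then QX i else 0

def cC (j : ℕ) : ℕ := if j % 2 = 0 then 2^(j/2) / 3 else 2^(j/2 - 1)
def pC (j : ℕ) : ℕ := if j % 2 = 0 then 2^(j/2) else 3 * 2^(j/2 - 1)

lemma cC_even (m : ℕ) : cC (2*m) = 2^m / 3 := by
  have h1 : (2*m) % 2 = 0 := by omega
  have h2 : (2*m) / 2 = m := by omega
  simp [cC, h1, h2]

lemma cC_odd (m : ℕ) : cC (2*m+1) = 2^(m-1) := by
  have h1 : (2*m+1) % 2 = 1 := by omega
  have h2 : (2*m+1) / 2 = m := by omega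
  simp [cC, h1, h2]

lemma pC_even (m : ℕ) : pC (2*m) = 2^m := by
  have h1 : (2*m) % 2 = 0 := by omega
  have h2 : (2*m) / 2 = m := by omega
  simp [pC, h1, h2]

lemma pC_odd (m : ℕ) : pC (2*m+1) = 3 * 2^(m-1) := by
  have h1 : (2*m+1) % 2 = 1 := by omega
  have h2 : (2*m+1) / 2 = m := by omega
  simp [pC, h1, h2]

lemma halfpow_mul_twopow (k : ℕ) : (1/2:ℝ)^k * (2:ℝ)^k = 1 := by
  rw [← mul_pow]; norm_num

lemma hcgood (j : ℕ) (hj : 3 ≤ j) : (1:ℝ) ≤ 6 * uB (j+1) * cC j := by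
  rcases Nat.even_or_odd j with ⟨m, hm⟩ | ⟨m, hm⟩
  · have hj2 : j = 2*m := by omega
    subst hj2
    obtain ⟨k, rfl⟩ : ∃ k, m = k + 2 := ⟨m - 2, by omega⟩
    rw [uB_odd, cC_even]
    have hfloor : 2^k ≤ 2^(k+2) / 3 := by
      rw [Nat.le_div_iff_mul_le (by norm_num)]
      have : 2^(k+2) = 2^k * 4 := by rw [pow_add]; ring
      omega
    have hcast : (2:ℝ)^k ≤ ((2^(k+2) / 3 : ℕ) : ℝ) := by exact_mod_cast hfloor
    have hpow : (1/2:ℝ)^(k+2) = (1/2)^k * (1/4) := by rw [pow_add]; norm_num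
    have hone := halfpow_mul_twopow k
    have h0 : (0:ℝ) ≤ (1/2:ℝ)^k := by positivity
    nlinarith [mul_le_mul_of_nonneg_left hcast h0]
  · have hj2 : j = 2*m + 1 := hm
    subst hj2
    obtain ⟨k, rfl⟩ : ∃ k, m = k + 1 := ⟨m - 1, by omega⟩
    have h2 : 2*(k+1)+1+1 = 2*(k+2) := by ring
    rw [h2, uB_even, cC_odd]
    have hc : ((2^(k+1-1) : ℕ) : ℝ) = (2:ℝ)^k := by norm_num
    rw [hc]
    have hpow : (1/2:ℝ)^(k+2) = (1/2)^k * (1/4) := by rw [pow_add]; norm_num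
    have hone := halfpow_mul_twopow k
    nlinarith

lemma hpgood (j : ℕ) (hj : 2 ≤ j) : (1:ℝ) ≤ (3/2) * uB (j+1) * pC j := by
  rcases Nat.even_or_odd j with ⟨m, hm⟩ | ⟨m, hm⟩
  · have hj2 : j = 2*m := by omega
    subst hj2
    rw [uB_odd, pC_even]
    have hone := halfpow_mul_twopow m
    have hc : ((2^m : ℕ) : ℝ) = (2:ℝ)^m := by norm_num
    rw [hc]
    nlinarith
  · have hj2 : j = 2*m + 1 := hm
    subst hj2
    obtain ⟨k, rfl⟩ : ∃ k, m = k + 1 := ⟨m - 1, by omega⟩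
    have h2 : 2*(k+1)+1+1 = 2*(k+2) := by ring
    rw [h2, uB_even, pC_odd]
    have hc : ((3 * 2^(k+1-1) : ℕ) : ℝ) = 3 * (2:ℝ)^k := by norm_num
    rw [hc]
    have hpow : (1/2:ℝ)^(k+2) = (1/2)^k * (1/4) := by rw [pow_add]; norm_num
    have hone := halfpow_mul_twopow k
    nlinarith

lemma key_step {n q u c K M : ℝ} (hn : 0 ≤ n) (hq : 0 ≤ q) (hu : 0 ≤ u)
    (hK : 0 ≤ K) (h1 : 1 ≤ K * u * c) (h2 : c * q ≤ M) :
    n * q ≤ K * M * (n * u) := by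
  have ha : n * q * 1 ≤ n * q * (K * u * c) := mul_le_mul_of_nonneg_left h1 (mul_nonneg hn hq)
  have hb : (K * (n * u)) * (c * q) ≤ (K * (n * u)) * M :=
    mul_le_mul_of_nonneg_left h2 (mul_nonneg hK (mul_nonneg hn hu))
  nlinarith [ha, hb]

set_option maxHeartbeats 1600000 in
/-- Case 2 of Proposition 1: if the feasible configuration `kX` uses exactly one job of a
size in `I 1 = (1/2, 2/3]`, some reduced configuration achieves at least `(2/3)` of its
weight. -/
theorem stmt4 (J : ℕ) (hJ : 2 ≤ J) (N : ℕ) (ξ : Fin N → ℝ)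
    (hξ : ∀ i, (1/2 : ℝ)^J < ξ i ∧ ξ i ≤ 1)
    (QX kX : Fin N → ℕ)
    (hfeas : ∑ i, (kX i : ℝ) * ξ i ≤ 1)
    (hZ1 : (∑ i, if memI 1 (ξ i) then kX i else 0) = 1) :
    ∃ k ∈ KRED J,
      (2/3 : ℝ) * ∑ i, (kX i : ℝ) * (QX i : ℝ) ≤
        ∑ j ∈ Finset.range (2*J), (k j : ℝ) * (Qagg ξ QX j : ℝ) := by
  classical
  set Q : ℕ → ℝ := fun j => ((Qagg ξ QX j : ℕ) : ℝ) with hQdef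
  set T : ℕ → ℝ := fun j => ∑ i, if memI j (ξ i) then (kX i : ℝ) * (QX i : ℝ) else 0 with hTdef
  set n : ℕ → ℝ := fun j => ∑ i, if memI j (ξ i) then (kX i : ℝ) else 0 with hndef
  -- decomposition of sums over jobs into sums over intervals
  have hdecomp : ∀ f : Fin N → ℝ, ∑ i, f i
      = ∑ j ∈ Finset.range (2*J), ∑ i, (if memI j (ξ i) then f i else 0) := by
    intro f
    have hper : ∀ i : Fin N,
        f i = ∑ j ∈ Finset.range (2*J), (if memI j (ξ i) then f i else 0) := by
      intro i
      obtain ⟨j₀, hj₀lt, hj₀⟩ := memI_exists J (ξ i) (hξ i).1 (hξ i).2 (by omega)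
      rw [Finset.sum_eq_single_of_mem j₀ (Finset.mem_range.mpr hj₀lt)
        (fun b _ hb => if_neg (fun hm => hb (memI_unique hm hj₀))), if_pos hj₀]
    calc ∑ i, f i
        = ∑ i, ∑ j ∈ Finset.range (2*J), (if memI j (ξ i) then f i else 0) :=
          Finset.sum_congr rfl fun i _ => hper i
      _ = _ := Finset.sum_comm
  have hQnn : ∀ j, 0 ≤ Q j := fun j => by positivity
  have hnnn : ∀ j, 0 ≤ n j := by
    intro j
    apply Finset.sum_nonneg
    intro i _
    split <;> positivity
  have hTQ : ∀ j, T j ≤ n j * Q j := by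
    intro j
    have h1 : ∀ i : Fin N, (if memI j (ξ i) then (kX i:ℝ) * QX i else 0)
        ≤ (if memI j (ξ i) then (kX i:ℝ) else 0) * Q j := by
      intro i
      split_ifs with h
      · have hle : QX i ≤ Qagg ξ QX j := by
          have := Finset.single_le_sum (f := fun i' : Fin N => if memI j (ξ i') then QX i' else 0)
            (fun i' _ => Nat.zero_le _) (Finset.mem_univ i)
          simpa [Qagg, h] using this
        have hle' : (QX i : ℝ) ≤ Q j := by
          simp only [hQdef]
          exact_mod_cast hle
        exact mul_le_mul_of_nonneg_left hle' (by positivity)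
      · simp
    calc T j ≤ ∑ i, (if memI j (ξ i) then (kX i:ℝ) else 0) * Q j :=
          Finset.sum_le_sum (fun i _ => h1 i)
      _ = n j * Q j := by rw [← Finset.sum_mul]
  have hTnn : ∀ j, 0 ≤ T j := by
    intro j
    apply Finset.sum_nonneg
    intro i _
    split <;> positivity
  -- n j is a natural number
  have hncast : ∀ j, ∃ nn : ℕ, n j = (nn : ℝ) := by
    intro j
    refine ⟨∑ i, if memI j (ξ i) then kX i else 0, ?_⟩
    rw [hndef, Nat.cast_sum]
    exact Finset.sum_congr rfl fun i _ => by split_ifs <;> simp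
  -- capacity constraint
  have hcap : ∑ j ∈ Finset.range (2*J), n j * uB (j+1) ≤ 1 := by
    have h1 : ∀ j ∈ Finset.range (2*J), n j * uB (j+1)
        ≤ ∑ i, (if memI j (ξ i) then (kX i:ℝ) * ξ i else 0) := by
      intro j _
      simp only [hndef]
      rw [Finset.sum_mul]
      apply Finset.sum_le_sum
      intro i _
      split_ifs with h
      · exact mul_le_mul_of_nonneg_left ((memI_iff j (ξ i)).mp h).1.le (by positivity)
      · simp
    calc ∑ j ∈ Finset.range (2*J), n j * uB (j+1)
        ≤ ∑ j ∈ Finset.range (2*J), ∑ i, (if memI j (ξ i) then (kX i:ℝ) * ξ i else 0) :=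
          Finset.sum_le_sum h1
      _ = ∑ i, (kX i:ℝ) * ξ i := (hdecomp _).symm
      _ ≤ 1 := hfeas
  have hn1 : n 1 = 1 := by
    have hc : n 1 = ((∑ i, if memI 1 (ξ i) then kX i else 0 : ℕ) : ℝ) := by
      simp only [hndef]
      rw [Nat.cast_sum]
      exact Finset.sum_congr rfl fun i _ => by split_ifs <;> simp
    rw [hc, hZ1, Nat.cast_one]
  -- split the index range
  have hsplit : Finset.range (2*J) = insert 0 (insert 1 (insert 2 (Finset.Icc 3 (2*J-1)))) := by
    ext j
    simp only [Finset.mem_range, Finset.mem_insert, Finset.mem_Icc]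
    omega
  have h0ni : (0:ℕ) ∉ insert 1 (insert 2 (Finset.Icc 3 (2*J-1))) := by
    simp only [Finset.mem_insert, Finset.mem_Icc]
    omega
  have h1ni : (1:ℕ) ∉ insert 2 (Finset.Icc 3 (2*J-1)) := by
    simp only [Finset.mem_insert, Finset.mem_Icc]
    omega
  have h2ni : (2:ℕ) ∉ Finset.Icc 3 (2*J-1) := by
    simp only [Finset.mem_Icc]
    omega
  set R : ℝ := ∑ j ∈ Finset.Icc 3 (2*J-1), n j * uB (j+1) with hRdef
  set S : ℝ := ∑ j ∈ Finset.Icc 3 (2*J-1), T j with hSdef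
  have hcap2 : n 0 * (2/3) + (1/2) + n 2 * (1/3) + R ≤ 1 := by
    rw [hsplit, Finset.sum_insert h0ni, Finset.sum_insert h1ni, Finset.sum_insert h2ni] at hcap
    have e1 : uB 1 = (2/3 : ℝ) := by simpa using uB_odd 0
    have e2 : uB 2 = (1/2 : ℝ) := by simpa using uB_even 1
    have e3 : uB 3 = (1/3 : ℝ) := by rw [show (3:ℕ) = 2*1+1 by norm_num, uB_odd]; norm_num
    rw [e1, e2, e3, hn1] at hcap
    linarith
  have hRnn : 0 ≤ R := Finset.sum_nonneg fun j _ => mul_nonneg (hnnn j) (uB_pos _).le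
  have hn0 : n 0 = 0 := by
    obtain ⟨m0, hm0⟩ := hncast 0
    have h2nn := hnnn 2
    have : (m0 : ℝ) < 1 := by rw [← hm0]; linarith
    have : m0 = 0 := by exact_mod_cast Nat.lt_one_iff.mp (by exact_mod_cast this)
    rw [hm0, this]; norm_num
  have hn2cases : n 2 = 0 ∨ n 2 = 1 := by
    obtain ⟨m2, hm2⟩ := hncast 2
    have h0nn := hnnn 0
    have : (m2 : ℝ) < 2 := by rw [← hm2]; linarith
    have h2 : m2 < 2 := by exact_mod_cast this
    interval_cases m2
    · left; rw [hm2]; norm_num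
    · right; rw [hm2]; norm_num
  have hRb : R ≤ 1/2 - n 2 * (1/3) := by linarith [hnnn 0]
  -- the two maxima
  have hne3 : (Finset.Icc 3 (2*J-1)).Nonempty := ⟨3, by simp only [Finset.mem_Icc]; omega⟩
  have hne2 : (Finset.Icc 2 (2*J-1)).Nonempty := ⟨2, by simp only [Finset.mem_Icc]; omega⟩
  obtain ⟨jC, hjCmem, hjCmax⟩ :=
    Finset.exists_max_image (Finset.Icc 3 (2*J-1)) (fun j => (cC j : ℝ) * Q j) hne3
  obtain ⟨jP, hjPmem, hjPmax⟩ :=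
    Finset.exists_max_image (Finset.Icc 2 (2*J-1)) (fun j => (pC j : ℝ) * Q j) hne2
  set C : ℝ := (cC jC : ℝ) * Q jC with hCdef
  set P : ℝ := (pC jP : ℝ) * Q jP with hPdef
  have hCnn : 0 ≤ C := by positivity
  have hPnn : 0 ≤ P := by positivity
  obtain ⟨hjC3, hjCub⟩ := Finset.mem_Icc.mp hjCmem
  obtain ⟨hjP2, hjPub⟩ := Finset.mem_Icc.mp hjPmem
  -- bounds on S
  have hSC : S ≤ 6 * C * R := by
    rw [hSdef, hRdef, Finset.mul_sum]
    apply Finset.sum_le_sum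
    intro j hj
    obtain ⟨hj3, hjub⟩ := Finset.mem_Icc.mp hj
    calc T j ≤ n j * Q j := hTQ j
      _ ≤ 6 * C * (n j * uB (j+1)) :=
        key_step (hnnn j) (hQnn j) (uB_pos _).le (by norm_num)
          (hcgood j hj3) (hjCmax j hj)
  have hSP : S ≤ (3/2) * P * R := by
    rw [hSdef, hRdef, Finset.mul_sum]
    apply Finset.sum_le_sum
    intro j hj
    obtain ⟨hj3, hjub⟩ := Finset.mem_Icc.mp hj
    calc T j ≤ n j * Q j := hTQ j
      _ ≤ (3/2) * P * (n j * uB (j+1)) :=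
        key_step (hnnn j) (hQnn j) (uB_pos _).le (by norm_num)
          (hpgood j (by omega)) (hjPmax j (Finset.mem_Icc.mpr ⟨by omega, hjub⟩))
  have hQ2P : 2 * Q 2 ≤ P := by
    have := hjPmax 2 (Finset.mem_Icc.mpr ⟨le_refl 2, by omega⟩)
    simpa [show pC 2 = 2 by simpa using pC_even 1] using this
  -- decomposition of the objective
  have hUeq : ∑ i, (kX i : ℝ) * (QX i : ℝ) = T 0 + (T 1 + (T 2 + S)) := by
    rw [hdecomp (fun i => (kX i : ℝ) * (QX i : ℝ)), hsplit,
      Finset.sum_insert h0ni, Finset.sum_insert h1ni, Finset.sum_insert h2ni]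
  have hT0 : T 0 ≤ 0 := by
    have := hTQ 0
    rw [hn0, zero_mul] at this
    exact this
  have hT1 : T 1 ≤ Q 1 := by
    have := hTQ 1
    rwa [hn1, one_mul] at this
  have hT2 : T 2 ≤ n 2 * Q 2 := hTQ 2
  -- the main bound
  have hmain : ∀ t : ℝ, Q 1 + C ≤ t → P ≤ t →
      (2/3 : ℝ) * ∑ i, (kX i : ℝ) * (QX i : ℝ) ≤ t := by
    intro t h1t h2t
    rw [hUeq]
    rcases hn2cases with h2 | h2
    · have hR12 : R ≤ 1/2 := by rw [h2] at hRb; linarith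
      have hSC' : S ≤ 3 * C := by
        have h6 : 6 * C * R ≤ 6 * C * (1/2) := mul_le_mul_of_nonneg_left hR12 (by linarith)
        linarith
      have hSP' : S ≤ (3/4) * P := by
        have h6 : (3/2) * P * R ≤ (3/2) * P * (1/2) := mul_le_mul_of_nonneg_left hR12 (by linarith)
        linarith
      have hT2' : T 2 ≤ 0 := by rw [h2, zero_mul] at hT2; exact hT2
      linarith
    · have hR16 : R ≤ 1/6 := by rw [h2] at hRb; linarith
      have hSC' : S ≤ C := by
        have h6 : 6 * C * R ≤ 6 * C * (1/6) := mul_le_mul_of_nonneg_left hR16 (by linarith)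
        linarith
      have hT2' : T 2 ≤ Q 2 := by rw [h2, one_mul] at hT2; exact hT2
      linarith [hQ2P]
  -- choose the winning configuration
  by_cases hcase : P ≤ Q 1 + C
  · rcases Nat.even_or_odd jC with ⟨m, hm⟩ | ⟨m, hm⟩
    · have hjCe : jC = 2*m := by omega
      have hm2 : 2 ≤ m := by omega
      have hmJ : m < J := by omega
      refine ⟨fun i => if i = 1 then 1 else if i = 2*m then 2^m / 3 else 0,
        Or.inr (Or.inr (Or.inl ⟨m, hm2, hmJ, rfl⟩)), ?_⟩
      rw [sum_two_point (fun j => ((Qagg ξ QX j : ℕ) : ℝ)) (2*J) 1 (2*m) 1 (2^m/3)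
        (by omega) (by omega) (by omega)]
      have hCval : C = ((2^m/3 : ℕ) : ℝ) * Q (2*m) := by
        rw [hCdef, hjCe, cC_even]
      have := hmain (Q 1 + C) le_rfl hcase
      rw [hCval] at this
      push_cast at this ⊢
      linarith
    · have hjCo : jC = 2*m + 1 := hm
      have hm1 : 1 ≤ m := by omega
      have hmJ : m < J := by omega
      refine ⟨fun i => if i = 1 then 1 else if i = 2*m+1 then 2^(m-1) else 0,
        Or.inr (Or.inr (Or.inr ⟨m, hm1, hmJ, rfl⟩)), ?_⟩
      rw [sum_two_point (fun j => ((Qagg ξ QX j : ℕ) : ℝ)) (2*J) 1 (2*m+1) 1 (2^(m-1))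
        (by omega) (by omega) (by omega)]
      have hCval : C = ((2^(m-1) : ℕ) : ℝ) * Q (2*m+1) := by
        rw [hCdef, hjCo, cC_odd]
      have := hmain (Q 1 + C) le_rfl hcase
      rw [hCval] at this
      push_cast at this ⊢
      linarith
  · push_neg at hcase
    rcases Nat.even_or_odd jP with ⟨m, hm⟩ | ⟨m, hm⟩
    · have hjPe : jP = 2*m := by omega
      have hmJ : m < J := by omega
      refine ⟨fun i => if i = 2*m then 2^m else 0, Or.inl ⟨m, hmJ, rfl⟩, ?_⟩
      rw [sum_one_point (fun j => ((Qagg ξ QX j : ℕ) : ℝ)) (2*J) (2*m) (2^m)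
        (by omega)]
      have hPval : P = ((2^m : ℕ) : ℝ) * Q (2*m) := by
        rw [hPdef, hjPe, pC_even]
      have := hmain P (by linarith) le_rfl
      rw [hPval] at this
      push_cast at this ⊢
      linarith
    · have hjPo : jP = 2*m + 1 := hm
      have hm1 : 1 ≤ m := by omega
      have hmJ : m < J := by omega
      refine ⟨fun i => if i = 2*m+1 then 3 * 2^(m-1) else 0,
        Or.inr (Or.inl ⟨m, hm1, hmJ, rfl⟩), ?_⟩
      rw [sum_one_point (fun j => ((Qagg ξ QX j : ℕ) : ℝ)) (2*J) (2*m+1) (3 * 2^(m-1))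
        (by omega)]
      have hPval : P = ((3 * 2^(m-1) : ℕ) : ℝ) * Q (2*m+1) := by
        rw [hPdef, hjPo, pC_odd]
      have := hmain P (by linarith) le_rfl
      rw [hPval] at this
      push_cast at this ⊢
      linarith
end

section
/- Fix an integer J ≥ 2. Let (ξ_1,…,ξ_N; Q^X_1,…,Q^X_N) be a refinement instance and k^X ∈ ℤ_{≥0}^N a feasible configuration with Σ_{i ∈ Z_1} k^X_i = 1 and Σ_{i ∈ Z_2} k^X_i = 1. Set U = Σ_{i=1}^N k^X_i Q^X_i and U′ = U − Q_1 − Q_2, and suppose U/2 ≤ Q_1 < 2U/3 and Q_2 < U/3. Then at least one of the following holds: Q_{2m} ≥ U′/2^{m−2} for some m ∈ {2, …, J−1}, or Q_{2m+1} ≥ U′/2^{m−1} for some m ∈ {1, …, J−1}. -/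
attribute [local instance] Classical.propDecidable

lemma memI_zero {x : ℝ} : memI 0 x ↔ 2/3 < x ∧ x ≤ 1 := by norm_num [memI]
lemma memI_one {x : ℝ} : memI 1 x ↔ 1/2 < x ∧ x ≤ 2/3 := by norm_num [memI]
lemma memI_two {x : ℝ} : memI 2 x ↔ 1/3 < x ∧ x ≤ 1/2 := by norm_num [memI]

lemma memI_even {m : ℕ} {x : ℝ} :
    memI (2*m) x ↔ (2/3)*(1/2:ℝ)^m < x ∧ x ≤ (1/2:ℝ)^m := by
  have h1 : (2*m) % 2 = 0 := by omega
  have h2 : (2*m) / 2 = m := by omega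
  simp [memI, h1, h2]

lemma memI_odd {m : ℕ} {x : ℝ} :
    memI (2*m+1) x ↔ (1/2)*(1/2:ℝ)^m < x ∧ x ≤ (2/3)*(1/2:ℝ)^m := by
  have h1 : (2*m+1) % 2 = 1 := by omega
  have h2 : (2*m+1) / 2 = m := by omega
  simp [memI, h1, h2]

lemma exists_dyadic : ∀ (J : ℕ) (x : ℝ), (1/2:ℝ)^J < x → x ≤ 1 →
    ∃ m < J, (1/2:ℝ)^(m+1) < x ∧ x ≤ (1/2:ℝ)^m := by
  intro J
  induction J with
  | zero => intro x h1 h2; norm_num at h1; linarith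
  | succ n ih =>
    intro x h1 h2
    by_cases h : (1/2:ℝ)^n < x
    · obtain ⟨m, hm, hx⟩ := ih x h h2
      exact ⟨m, Nat.lt_succ_of_lt hm, hx⟩
    · push_neg at h
      exact ⟨n, Nat.lt_succ_self n, h1, h⟩

lemma exists_memI (J : ℕ) (x : ℝ) (h1 : (1/2:ℝ)^J < x) (h2 : x ≤ 1) :
    ∃ m < J, memI (2*m) x ∨ memI (2*m+1) x := by
  obtain ⟨m, hm, hlt, hle⟩ := exists_dyadic J x h1 h2
  refine ⟨m, hm, ?_⟩
  by_cases h : (2/3)*(1/2:ℝ)^m < x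
  · exact Or.inl (memI_even.mpr ⟨h, hle⟩)
  · push_neg at h
    rw [pow_succ] at hlt
    exact Or.inr (memI_odd.mpr ⟨by linarith, h⟩)

lemma memI_disj12 {x : ℝ} (h1 : memI 1 x) (h2 : memI 2 x) : False := by
  rw [memI_one] at h1; rw [memI_two] at h2; linarith [h1.1, h2.2]

/-- The claim around equation (Q_up2) in the appendix subcase of Case 2.2 of Proposition 1:
if `kX` is feasible, uses exactly one job with size in `I 1` and exactly one with size in
`I 2`, `U/2 ≤ Q 1 < 2U/3` and `Q 2 < U/3`, then with `U′ = U − Q 1 − Q 2` either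
`Q (2m) ≥ U′/2^{m-2}` for some `m ∈ {2,…,J-1}`, or `Q (2m+1) ≥ U′/2^{m-1}` for some
`m ∈ {1,…,J-1}`. -/
theorem stmt7 (J : ℕ) (hJ : 2 ≤ J) (N : ℕ) (ξ : Fin N → ℝ)
    (hξ : ∀ i, (1/2 : ℝ)^J < ξ i ∧ ξ i ≤ 1)
    (QX kX : Fin N → ℕ)
    (hfeas : ∑ i, (kX i : ℝ) * ξ i ≤ 1)
    (hZ1 : (∑ i, if memI 1 (ξ i) then kX i else 0) = 1)
    (hZ2 : (∑ i, if memI 2 (ξ i) then kX i else 0) = 1)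
    (U U' : ℝ) (hU : U = ∑ i, (kX i : ℝ) * (QX i : ℝ))
    (hU' : U' = U - (Qagg ξ QX 1 : ℝ) - (Qagg ξ QX 2 : ℝ))
    (hQ1lo : U/2 ≤ (Qagg ξ QX 1 : ℝ)) (hQ1hi : (Qagg ξ QX 1 : ℝ) < 2*U/3)
    (hQ2 : (Qagg ξ QX 2 : ℝ) < U/3) :
    (∃ m, 2 ≤ m ∧ m < J ∧ U' / 2^(m-2) ≤ (Qagg ξ QX (2*m) : ℝ)) ∨
    (∃ m, 1 ≤ m ∧ m < J ∧ U' / 2^(m-1) ≤ (Qagg ξ QX (2*m+1) : ℝ)) := by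
  have hξpos : ∀ i, 0 < ξ i := fun i => lt_trans (by positivity) (hξ i).1
  by_cases hU'0 : U' ≤ 0
  · right
    refine ⟨1, le_refl 1, lt_of_lt_of_le one_lt_two hJ, ?_⟩
    have h1 : U' / 2^(1-1) = U' := by norm_num
    rw [h1]
    exact hU'0.trans (Nat.cast_nonneg _)
  push_neg at hU'0
  by_contra hcon
  push_neg at hcon
  obtain ⟨hce, hco⟩ := hcon
  -- cast versions of hZ1, hZ2
  have hZ1' : (∑ i, if memI 1 (ξ i) then ((kX i : ℕ) : ℝ) else 0) = 1 := by
    have := congrArg (Nat.cast : ℕ → ℝ) hZ1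
    push_cast at this
    exact this
  have hZ2' : (∑ i, if memI 2 (ξ i) then ((kX i : ℕ) : ℝ) else 0) = 1 := by
    have := congrArg (Nat.cast : ℕ → ℝ) hZ2
    push_cast at this
    exact this
  -- lower bounds on the scheduled mass in I1, I2
  have hB1 : (1/2:ℝ) ≤ ∑ i, (if memI 1 (ξ i) then (kX i:ℝ) * ξ i else 0) := by
    have step : ∑ i, (if memI 1 (ξ i) then (1/2:ℝ) * (kX i:ℝ) else 0)
        ≤ ∑ i, (if memI 1 (ξ i) then (kX i:ℝ) * ξ i else 0) := by
      apply Finset.sum_le_sum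
      intro i _
      by_cases h : memI 1 (ξ i)
      · simp only [h, if_pos]
        have hx := (memI_one.mp h).1
        have : (kX i:ℝ) * (1/2) ≤ (kX i:ℝ) * ξ i :=
          mul_le_mul_of_nonneg_left hx.le (Nat.cast_nonneg _)
        linarith
      · simp [h]
    have heq : ∑ i, (if memI 1 (ξ i) then (1/2:ℝ) * (kX i:ℝ) else 0) = 1/2 := by
      have : ∀ i : Fin N, (if memI 1 (ξ i) then (1/2:ℝ) * (kX i:ℝ) else 0)
          = (1/2:ℝ) * (if memI 1 (ξ i) then (kX i:ℝ) else 0) := by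
        intro i; split_ifs <;> ring
      rw [Finset.sum_congr rfl (fun i _ => this i), ← Finset.mul_sum, hZ1']
      norm_num
    linarith
  have hB2 : (1/3:ℝ) ≤ ∑ i, (if memI 2 (ξ i) then (kX i:ℝ) * ξ i else 0) := by
    have step : ∑ i, (if memI 2 (ξ i) then (1/3:ℝ) * (kX i:ℝ) else 0)
        ≤ ∑ i, (if memI 2 (ξ i) then (kX i:ℝ) * ξ i else 0) := by
      apply Finset.sum_le_sum
      intro i _
      by_cases h : memI 2 (ξ i)
      · simp only [h, if_pos]
        have hx := (memI_two.mp h).1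
        have : (kX i:ℝ) * (1/3) ≤ (kX i:ℝ) * ξ i :=
          mul_le_mul_of_nonneg_left hx.le (Nat.cast_nonneg _)
        linarith
      · simp [h]
    have heq : ∑ i, (if memI 2 (ξ i) then (1/3:ℝ) * (kX i:ℝ) else 0) = 1/3 := by
      have : ∀ i : Fin N, (if memI 2 (ξ i) then (1/3:ℝ) * (kX i:ℝ) else 0)
          = (1/3:ℝ) * (if memI 2 (ξ i) then (kX i:ℝ) else 0) := by
        intro i; split_ifs <;> ring
      rw [Finset.sum_congr rfl (fun i _ => this i), ← Finset.mul_sum, hZ2']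
      norm_num
    linarith
  -- no job in I0 can be scheduled
  have hkX0 : ∀ i, memI 0 (ξ i) → kX i = 0 := by
    intro i h0
    by_contra hne
    have hk1 : (1:ℝ) ≤ (kX i : ℝ) := by
      exact_mod_cast Nat.one_le_iff_ne_zero.mpr hne
    have h0' := memI_zero.mp h0
    have hbound : ∀ j : Fin N,
        (if memI 1 (ξ j) then (kX j:ℝ)*ξ j else 0)
        + (if memI 2 (ξ j) then (kX j:ℝ)*ξ j else 0)
        + (if j = i then (kX j:ℝ)*ξ j else 0) ≤ (kX j:ℝ)*ξ j := by
      intro j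
      have hnn : (0:ℝ) ≤ (kX j:ℝ)*ξ j := mul_nonneg (Nat.cast_nonneg _) (hξpos j).le
      by_cases hc : j = i
      · subst hc
        have hn1 : ¬ memI 1 (ξ j) := by
          rw [memI_one]; push_neg; intro h; linarith [h0'.1]
        have hn2 : ¬ memI 2 (ξ j) := by
          rw [memI_two]; push_neg; intro h; linarith [h0'.1]
        simp [hn1, hn2]
      · by_cases h1 : memI 1 (ξ j)
        · have hn2 : ¬ memI 2 (ξ j) := fun h2 => memI_disj12 h1 h2
          simp [h1, hn2, hc]
        · by_cases h2 : memI 2 (ξ j)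
          · simp [h1, h2, hc]
          · simp [h1, h2, hc, hnn]
    have hsum := Finset.sum_le_sum (fun j (_ : j ∈ Finset.univ) => hbound j)
    rw [Finset.sum_add_distrib, Finset.sum_add_distrib] at hsum
    have h3 : ∑ j, (if j = i then (kX j:ℝ)*ξ j else 0) = (kX i:ℝ)*ξ i := by
      simp
    rw [h3] at hsum
    have hxi : (kX i:ℝ)*ξ i ≥ 2/3 := by
      have := h0'.1
      nlinarith [hξpos i]
    linarith [hfeas, hB1, hB2]
  -- QX i ≤ Qagg j when ξ i ∈ I j
  have hQle : ∀ i j, memI j (ξ i) → (QX i : ℝ) ≤ (Qagg ξ QX j : ℝ) := by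
    intro i j hj
    have h : QX i ≤ Qagg ξ QX j := by
      unfold Qagg
      have := Finset.single_le_sum
        (f := fun t => if memI j (ξ t) then QX t else 0)
        (fun t _ => Nat.zero_le _) (Finset.mem_univ i)
      simpa [hj] using this
    exact_mod_cast h
  -- key pointwise bound
  have key : ∀ i, ¬ memI 1 (ξ i) → ¬ memI 2 (ξ i) → kX i ≠ 0 →
      (QX i : ℝ) < 6 * U' * ξ i := by
    intro i h1 h2 hk
    obtain ⟨m, hmJ, hc⟩ := exists_memI J (ξ i) (hξ i).1 (hξ i).2
    rcases hc with hc | hc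
    · match m, hmJ with
      | 0, _ =>
        exact absurd (hkX0 i (by simpa using hc)) hk
      | 1, _ =>
        exact absurd (show memI 2 (ξ i) by simpa using hc) h2
      | (m+2), hmJ =>
        have hq := hce (m+2) (by omega) hmJ
        have hQ := hQle i (2*(m+2)) hc
        have hlb := (memI_even.mp hc).1
        have hdiv : U' / 2^(m+2-2) = 4 * U' * (1/2:ℝ)^(m+2) := by
          have hm2 : m + 2 - 2 = m := by omega
          rw [hm2]
          rw [div_eq_mul_inv, ← one_div, ← one_div_pow]
          rw [pow_add]
          ring
        rw [hdiv] at hq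
        have hmul : 6 * U' * ((2/3)*(1/2:ℝ)^(m+2)) < 6 * U' * ξ i :=
          mul_lt_mul_of_pos_left hlb (by positivity)
        have : 6 * U' * ((2/3)*(1/2:ℝ)^(m+2)) = 4 * U' * (1/2:ℝ)^(m+2) := by ring
        linarith
    · match m, hmJ with
      | 0, _ =>
        exact absurd (show memI 1 (ξ i) by simpa using hc) h1
      | (m+1), hmJ =>
        have hq := hco (m+1) (by omega) hmJ
        have hQ := hQle i (2*(m+1)+1) hc
        have hlb := (memI_odd.mp hc).1
        have hdiv : U' / 2^(m+1-1) = 2 * U' * (1/2:ℝ)^(m+1) := by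
          have hm2 : m + 1 - 1 = m := by omega
          rw [hm2]
          rw [div_eq_mul_inv, ← one_div, ← one_div_pow]
          rw [pow_add]
          ring
        rw [hdiv] at hq
        have hmul : 6 * U' * ((1/2)*(1/2:ℝ)^(m+1)) < 6 * U' * ξ i :=
          mul_lt_mul_of_pos_left hlb (by positivity)
        have h3 : 6 * U' * ((1/2)*(1/2:ℝ)^(m+1)) = 3 * U' * (1/2:ℝ)^(m+1) := by ring
        have h4 : 2 * U' * (1/2:ℝ)^(m+1) ≤ 3 * U' * (1/2:ℝ)^(m+1) := by
          have : (0:ℝ) < U' * (1/2:ℝ)^(m+1) := by positivity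
          linarith
        linarith
  -- splitting sums into I1, I2 and rest
  have hsplit : ∀ g : Fin N → ℝ, ∑ i, g i
      = (∑ i, if memI 1 (ξ i) then g i else 0)
      + (∑ i, if memI 2 (ξ i) then g i else 0)
      + (∑ i, if ¬ memI 1 (ξ i) ∧ ¬ memI 2 (ξ i) then g i else 0) := by
    intro g
    rw [← Finset.sum_add_distrib, ← Finset.sum_add_distrib]
    apply Finset.sum_congr rfl
    intro i _
    by_cases h1 : memI 1 (ξ i)
    · have h2 : ¬ memI 2 (ξ i) := fun h => memI_disj12 h1 h
      simp [h1, h2]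
    · by_cases h2 : memI 2 (ξ i) <;> simp [h1, h2]
  -- A1 ≤ Q1, A2 ≤ Q2
  have hA1 : (∑ i, if memI 1 (ξ i) then (kX i:ℝ) * (QX i:ℝ) else 0)
      ≤ (Qagg ξ QX 1 : ℝ) := by
    have step : ∑ i, (if memI 1 (ξ i) then (kX i:ℝ) * (QX i:ℝ) else 0)
        ≤ ∑ i, (if memI 1 (ξ i) then (kX i:ℝ) * (Qagg ξ QX 1:ℝ) else 0) := by
      apply Finset.sum_le_sum
      intro i _
      by_cases h : memI 1 (ξ i)
      · simp only [h, if_pos]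
        exact mul_le_mul_of_nonneg_left (hQle i 1 h) (Nat.cast_nonneg _)
      · simp [h]
    have heq : ∑ i, (if memI 1 (ξ i) then (kX i:ℝ) * (Qagg ξ QX 1:ℝ) else 0)
        = (Qagg ξ QX 1 : ℝ) := by
      have : ∀ i : Fin N, (if memI 1 (ξ i) then (kX i:ℝ) * (Qagg ξ QX 1:ℝ) else 0)
          = (Qagg ξ QX 1:ℝ) * (if memI 1 (ξ i) then (kX i:ℝ) else 0) := by
        intro i; split_ifs <;> ring
      rw [Finset.sum_congr rfl (fun i _ => this i), ← Finset.mul_sum, hZ1', mul_one]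
    linarith
  have hA2 : (∑ i, if memI 2 (ξ i) then (kX i:ℝ) * (QX i:ℝ) else 0)
      ≤ (Qagg ξ QX 2 : ℝ) := by
    have step : ∑ i, (if memI 2 (ξ i) then (kX i:ℝ) * (QX i:ℝ) else 0)
        ≤ ∑ i, (if memI 2 (ξ i) then (kX i:ℝ) * (Qagg ξ QX 2:ℝ) else 0) := by
      apply Finset.sum_le_sum
      intro i _
      by_cases h : memI 2 (ξ i)
      · simp only [h, if_pos]
        exact mul_le_mul_of_nonneg_left (hQle i 2 h) (Nat.cast_nonneg _)
      · simp [h]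
    have heq : ∑ i, (if memI 2 (ξ i) then (kX i:ℝ) * (Qagg ξ QX 2:ℝ) else 0)
        = (Qagg ξ QX 2 : ℝ) := by
      have : ∀ i : Fin N, (if memI 2 (ξ i) then (kX i:ℝ) * (Qagg ξ QX 2:ℝ) else 0)
          = (Qagg ξ QX 2:ℝ) * (if memI 2 (ξ i) then (kX i:ℝ) else 0) := by
        intro i; split_ifs <;> ring
      rw [Finset.sum_congr rfl (fun i _ => this i), ← Finset.mul_sum, hZ2', mul_one]
    linarith
  set R : ℝ := ∑ i, if ¬ memI 1 (ξ i) ∧ ¬ memI 2 (ξ i) then (kX i:ℝ) * (QX i:ℝ) else 0 with hR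
  set S : ℝ := ∑ i, if ¬ memI 1 (ξ i) ∧ ¬ memI 2 (ξ i) then (kX i:ℝ) * ξ i else 0 with hS
  have hUR : U' ≤ R := by
    have h := hsplit (fun i => (kX i:ℝ) * (QX i:ℝ))
    rw [hU'] at *
    rw [hU] at *
    linarith [hA1, hA2]
  have hS16 : S ≤ 1/6 := by
    have h := hsplit (fun i => (kX i:ℝ) * ξ i)
    linarith [hfeas, hB1, hB2]
  have hRpos : 0 < R := lt_of_lt_of_le hU'0 hUR
  obtain ⟨i₀, _, hi₀⟩ := Finset.exists_ne_zero_of_sum_ne_zero (ne_of_gt hRpos)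
  have hcond₀ : (¬ memI 1 (ξ i₀) ∧ ¬ memI 2 (ξ i₀)) ∧ (kX i₀:ℝ) * (QX i₀:ℝ) ≠ 0 := by
    by_cases h : ¬ memI 1 (ξ i₀) ∧ ¬ memI 2 (ξ i₀)
    · refine ⟨h, ?_⟩
      simpa [h] using hi₀
    · exfalso; apply hi₀; simp [h]
  have hk₀ : kX i₀ ≠ 0 := by
    intro h
    apply hcond₀.2
    simp [h]
  have hk₀pos : (0:ℝ) < (kX i₀:ℝ) := by
    exact_mod_cast Nat.pos_of_ne_zero hk₀
  have hT : R < 6 * U' * S := by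
    have hlt : R < ∑ i, if ¬ memI 1 (ξ i) ∧ ¬ memI 2 (ξ i)
        then 6 * U' * ((kX i:ℝ) * ξ i) else 0 := by
      rw [hR]
      apply Finset.sum_lt_sum
      · intro i _
        by_cases h : ¬ memI 1 (ξ i) ∧ ¬ memI 2 (ξ i)
        · simp only [h, if_pos]
          by_cases hk : kX i = 0
          · simp [hk]
          · have hkey := key i h.1 h.2 hk
            have := mul_le_mul_of_nonneg_left hkey.le (Nat.cast_nonneg (kX i) : (0:ℝ) ≤ (kX i:ℝ))
            calc (kX i:ℝ) * (QX i:ℝ) ≤ (kX i:ℝ) * (6 * U' * ξ i) := this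
              _ = 6 * U' * ((kX i:ℝ) * ξ i) := by ring
        · simp [h]
      · refine ⟨i₀, Finset.mem_univ i₀, ?_⟩
        have hkey := key i₀ hcond₀.1.1 hcond₀.1.2 hk₀
        have h1 : (¬ memI 1 (ξ i₀) ∧ ¬ memI 2 (ξ i₀)) := hcond₀.1
        rw [if_pos h1, if_pos h1]
        calc (kX i₀:ℝ) * (QX i₀:ℝ) < (kX i₀:ℝ) * (6 * U' * ξ i₀) :=
              mul_lt_mul_of_pos_left hkey hk₀pos
          _ = 6 * U' * ((kX i₀:ℝ) * ξ i₀) := by ring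
    have heq : ∑ i, (if ¬ memI 1 (ξ i) ∧ ¬ memI 2 (ξ i)
        then 6 * U' * ((kX i:ℝ) * ξ i) else 0) = 6 * U' * S := by
      rw [hS, Finset.mul_sum]
      apply Finset.sum_congr rfl
      intro i _
      split_ifs <;> ring
    linarith
  have hfin : 6 * U' * S ≤ U' := by
    nlinarith [mul_le_mul_of_nonneg_left hS16 (by positivity : (0:ℝ) ≤ 6*U')]
  linarith
end
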